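/- (q-extension of Cheon's formula.) For every integer n ≥ 0 and all x, y ∈ ℂ: B_{n,q}(x,y) = Σ_{k=0}^{n} [n choose k]_q ( B_{k,q}(x) + ((−1;q)_{k−1}/2^{k}) [k]_q x^{k−1} ) E_{n−k,q}(y), where the term ((−1;q)_{k−1}/2^{k}) [k]_q x^{k−1} is understood to vanish for k = 0. -/

import Mathlib

open Finset PowerSeries

/-- The `q`-number `[n]_q = (1 - q^n)/(1 - q)`. -/
noncomputable def qNum (q : ℂ) (n : ℕ) : ℂ := (1 - q ^ n) / (1 - q)

/-- The `q`-factorial `[n]_q!`. -/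
noncomputable def qFact (q : ℂ) : ℕ → ℂ
  | 0 => 1
  | n + 1 => qNum q (n + 1) * qFact q n

/-- The `q`-shifted factorial `(a; q)_n = ∏_{j=0}^{n-1} (1 - q^j a)`. -/
noncomputable def qShift (a q : ℂ) (n : ℕ) : ℂ := ∏ j ∈ Finset.range n, (1 - q ^ j * a)

/-- The Gaussian binomial coefficient `[n choose k]_q = (q;q)_n / ((q;q)_{n-k} (q;q)_k)`. -/
noncomputable def qBinom (q : ℂ) (n k : ℕ) : ℂ :=
  qShift q q n / (qShift q q (n - k) * qShift q q k)

/-- The formal power series (in `t`) `𝓔_q(tx) = Σ_{n≥0} (-1;q)_n (x)^n t^n / (2^n [n]_q!)`. -/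
noncomputable def qExp (q x : ℂ) : PowerSeries ℂ :=
  PowerSeries.mk fun n => qShift (-1) q n * x ^ n / (2 ^ n * qFact q n)

/-- The generating series `Σ_{n≥0} a_n t^n / [n]_q!` of a sequence `a`. -/
noncomputable def qGen (q : ℂ) (a : ℕ → ℂ) : PowerSeries ℂ :=
  PowerSeries.mk fun n => a n / qFact q n

/-- The `q`-addition `(x ⊕_q y)^n`. -/
noncomputable def qAdd (q x y : ℂ) (n : ℕ) : ℂ :=
  ∑ k ∈ Finset.range (n + 1),
    qBinom q n k * (qShift (-1) q k * qShift (-1) q (n - k) / 2 ^ n) * x ^ k * y ^ (n - k)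

/-!
Since `(𝓔_q(t) + 1)/(𝓔_q(t) - 1) = 1 + 2/(𝓔_q(t) - 1)`, the Bernoulli generating function
factors as
`t 𝓔_q(tx) 𝓔_q(ty)/(𝓔_q(t) - 1) = (t 𝓔_q(tx)/(𝓔_q(t) - 1) + t 𝓔_q(tx)/2) · 2 𝓔_q(ty)/(𝓔_q(t) + 1)`.
The first factor generates `B_{k,q}(x)` plus the correction term, the second generates `E_{k,q}(y)`,
and a product of series `Σ a_n t^n/[n]_q!` is the `q`-binomial convolution of the coefficients.
-/

section

variable {q : ℂ}

lemma pow_ne_one_of_not_isOfFinOrder (hq : ¬IsOfFinOrder q) {k : ℕ} (hk : k ≠ 0) :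
    q ^ k ≠ 1 :=
  fun h ↦ hq (isOfFinOrder_iff_pow_eq_one.2 ⟨k, Nat.pos_of_ne_zero hk, h⟩)

lemma ne_one_of_not_isOfFinOrder (hq : ¬IsOfFinOrder q) : q ≠ 1 :=
  fun h ↦ hq (h ▸ IsOfFinOrder.one)

lemma qNum_ne_zero (hq : ¬IsOfFinOrder q) {k : ℕ} (hk : k ≠ 0) : qNum q k ≠ 0 :=
  div_ne_zero (sub_ne_zero.2 (pow_ne_one_of_not_isOfFinOrder hq hk).symm)
    (sub_ne_zero.2 (ne_one_of_not_isOfFinOrder hq).symm)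

lemma qNum_one (hq : q ≠ 1) : qNum q 1 = 1 := by
  simp [qNum, sub_ne_zero.2 hq.symm]

lemma qFact_ne_zero (hq : ¬IsOfFinOrder q) (n : ℕ) : qFact q n ≠ 0 := by
  induction n with
  | zero => simp [qFact]
  | succ m ih => exact mul_ne_zero (qNum_ne_zero hq m.succ_ne_zero) ih

lemma qShift_self (q : ℂ) (n : ℕ) : qShift q q n = (1 - q) ^ n * qFact q n := by
  induction n with
  | zero => simp [qShift, qFact]
  | succ m ih =>
    have hnum : (1 - q) * qNum q (m + 1) = 1 - q ^ (m + 1) := by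
      rcases eq_or_ne q 1 with rfl | hq
      · simp
      · exact mul_div_cancel₀ _ (sub_ne_zero.2 hq.symm)
    rw [qShift, prod_range_succ, ← qShift, ih, qFact]
    linear_combination -(1 - q) ^ m * qFact q m * hnum

lemma qBinom_eq_qFact_div (hq : ¬IsOfFinOrder q) {n k : ℕ} (hk : k ≤ n) :
    qBinom q n k = qFact q n / (qFact q k * qFact q (n - k)) := by
  have h1q : (1 : ℂ) - q ≠ 0 := sub_ne_zero.2 (ne_one_of_not_isOfFinOrder hq).symm
  have hpow : (1 - q) ^ n = (1 - q) ^ (n - k) * (1 - q) ^ k := by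
    rw [← pow_add, Nat.sub_add_cancel hk]
  have := qFact_ne_zero hq
  rw [qBinom, qShift_self, qShift_self, qShift_self, hpow]
  field_simp

lemma not_isOfFinOrder_of_norm_lt_one (hq : ‖q‖ < 1) : ¬IsOfFinOrder q :=
  fun h ↦ hq.ne h.norm_eq_one

@[simp]
lemma coeff_qGen (a : ℕ → ℂ) (n : ℕ) : coeff n (qGen q a) = a n / qFact q n :=
  coeff_mk _ _

lemma qGen_add (a b : ℕ → ℂ) : qGen q (a + b) = qGen q a + qGen q b := by
  ext n
  simp [add_div]

lemma qGen_injective (hq : ¬IsOfFinOrder q) : Function.Injective (qGen q) := by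
  intro a b h
  funext n
  have := congrArg (coeff n) h
  rwa [coeff_qGen, coeff_qGen, div_left_inj' (qFact_ne_zero hq n)] at this

lemma qGen_mul (hq : ¬IsOfFinOrder q) (a b : ℕ → ℂ) :
    qGen q a * qGen q b =
      qGen q fun n ↦ ∑ k ∈ range (n + 1), qBinom q n k * a k * b (n - k) := by
  ext n
  rw [coeff_mul, Nat.sum_antidiagonal_eq_sum_range_succ_mk, coeff_qGen, sum_div]
  refine sum_congr rfl fun k hk ↦ ?_
  have := qFact_ne_zero hq n
  rw [coeff_qGen, coeff_qGen, qBinom_eq_qFact_div hq (Nat.lt_succ_iff.1 (mem_range.1 hk))]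
  field_simp

lemma constantCoeff_qExp (q x : ℂ) : constantCoeff (qExp q x) = 1 := by
  simp [qExp, ← coeff_zero_eq_constantCoeff_apply, qShift, qFact]

lemma coeff_one_qExp (hq : q ≠ 1) (x : ℂ) : coeff 1 (qExp q x) = x := by
  simp only [qExp, coeff_mk, qShift, qFact, qNum_one hq, range_one, prod_singleton, pow_zero,
    pow_one, mul_one, mul_neg, sub_neg_eq_add]
  ring

lemma qExp_zero (q : ℂ) : qExp q 0 = 1 := by
  ext (_ | n)
  · simpa [coeff_zero_eq_constantCoeff_apply] using constantCoeff_qExp q 0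
  · simp [qExp]

noncomputable def qCheonCorrection (q x : ℂ) (k : ℕ) : ℂ :=
  qShift (-1) q (k - 1) / 2 ^ k * qNum q k * x ^ (k - 1)

lemma X_mul_qExp (hq : ¬IsOfFinOrder q) (x : ℂ) :
    X * qExp q x = 2 * qGen q (qCheonCorrection q x) := by
  rw [← map_ofNat C 2]
  ext (_ | m)
  · simp [qNum, qCheonCorrection]
  · have := qFact_ne_zero hq m
    have := qNum_ne_zero hq m.succ_ne_zero
    simp only [qExp, coeff_succ_X_mul, coeff_mk, coeff_C_mul, coeff_qGen, qCheonCorrection,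
      add_tsub_cancel_right, qFact]
    field_simp
    ring

lemma qExp_one_sub_one_ne_zero (hq : q ≠ 1) : qExp q 1 - 1 ≠ 0 := fun h ↦ by
  simpa [coeff_one_qExp hq] using congrArg (coeff 1) h

lemma qExp_one_add_one_ne_zero (q : ℂ) : qExp q 1 + 1 ≠ 0 := fun h ↦ by
  simpa [constantCoeff_qExp] using congrArg constantCoeff h

lemma qGen_bernoulli_eq_mul_qGen_euler (hq : ¬IsOfFinOrder q) {b b₀ e : ℕ → ℂ} {x y : ℂ}
    (hb : qGen q b * (qExp q 1 - 1) = X * qExp q x * qExp q y)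
    (hb₀ : qGen q b₀ * (qExp q 1 - 1) = X * qExp q x)
    (he : qGen q e * (qExp q 1 + 1) = 2 * qExp q y) :
    qGen q b = qGen q (b₀ + qCheonCorrection q x) * qGen q e := by
  refine mul_right_cancel₀ (mul_ne_zero (qExp_one_sub_one_ne_zero (ne_one_of_not_isOfFinOrder hq))
    (qExp_one_add_one_ne_zero q)) ?_
  rw [qGen_add]
  linear_combination (qExp q 1 + 1) * hb
    - (qExp q 1 - 1) * (qGen q b₀ + qGen q (qCheonCorrection q x)) * he
    - 2 * qExp q y * hb₀ + qExp q y * (qExp q 1 - 1) * X_mul_qExp hq x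

end

theorem qCheon_formula_general (q : ℂ) (hq1 : ‖q‖ < 1)
    (B E : ℂ → ℂ → ℕ → ℂ)
    (hB : ∀ x y : ℂ, qGen q (B x y) * (qExp q 1 - 1) = PowerSeries.X * qExp q x * qExp q y)
    (hE : ∀ x y : ℂ, qGen q (E x y) * (qExp q 1 + 1) = 2 * qExp q x * qExp q y)
    (n : ℕ) (x y : ℂ) :
    B x y n = ∑ k ∈ Finset.range (n + 1),
      qBinom q n k *
        (B x 0 k + qShift (-1) q (k - 1) / 2 ^ k * qNum q k * x ^ (k - 1)) *
        E y 0 (n - k) := by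
  have hq := not_isOfFinOrder_of_norm_lt_one hq1
  have hB₀ := hB x 0
  have hE₀ := hE y 0
  rw [qExp_zero, mul_one] at hB₀ hE₀
  have key := qGen_bernoulli_eq_mul_qGen_euler hq (hB x y) hB₀ hE₀
  rw [qGen_mul hq] at key
  exact congrFun (qGen_injective hq key) n

/-- `q`-extension of Cheon's formula relating `q`-Bernoulli and `q`-Euler polynomials.
(For `k = 0` the extra term vanishes since `[0]_q = 0`.) -/
theorem qCheon_formula (q : ℂ) (hq0 : 0 < ‖q‖) (hq1 : ‖q‖ < 1)
    (B E : ℂ → ℂ → ℕ → ℂ)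
    (hB : ∀ x y : ℂ, qGen q (B x y) * (qExp q 1 - 1) = PowerSeries.X * qExp q x * qExp q y)
    (hE : ∀ x y : ℂ, qGen q (E x y) * (qExp q 1 + 1) = 2 * qExp q x * qExp q y)
    (n : ℕ) (x y : ℂ) :
    B x y n = ∑ k ∈ Finset.range (n + 1),
      qBinom q n k *
        (B x 0 k + qShift (-1) q (k - 1) / 2 ^ k * qNum q k * x ^ (k - 1)) *
        E y 0 (n - k) :=
  qCheon_formula_general q hq1 B E hB hE n x y
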